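/- For every fixed γ > 0, the dimensionless energy-to-pressure ratio of the gas with internal structure recovers the monatomic (Synge) value as the parameter a tends to −1 from above: lim_{a→−1⁺} r(γ, a) = γ · K₃(γ)/K₂(γ) − 1. -/

import Mathlib

open MeasureTheory Real Filter Set

/-- Modified Bessel function of the second kind, integral representation. -/
noncomputable def besselK (n : ℕ) (x : ℝ) : ℝ :=
  ∫ t in Set.Ioi (0 : ℝ), Real.exp (-x * Real.cosh t) * Real.cosh (n * t)

/-- Dimensionless energy-to-pressure ratio `r(γ, a) = e/p` of a relativistic
gas with internal structure, state-density measure `φ(I) = I^a`. -/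
noncomputable def rRatio (γ a : ℝ) : ℝ :=
  (∫ s in Set.Ioi γ, (besselK 3 s - besselK 2 s / s) * (s - γ) ^ a) /
  (∫ s in Set.Ioi γ, (besselK 2 s / s) * (s - γ) ^ a)

/-!
The weights `(a + 1) (s - γ) ^ a ds` on `(γ, ∞)` concentrate at `γ` as `a → -1⁺`: the substitution
`s = γ + x ^ p` with `p = 1 / (a + 1)` turns `(a + 1) ∫ h(s) (s - γ) ^ a ds` into `∫₀^∞ h(γ + x ^ p) dx`,
whose integrand tends to `h(γ)` on `(0, 1)` and to `0` on `(1, ∞)` as `p → ∞`. Since the Bessel functions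
decay like `e^{-s}`, dominated convergence applies to numerator and denominator of `r(γ, a)` separately,
and the factor `a + 1` cancels in the ratio, leaving `(K₃(γ) - K₂(γ)/γ) / (K₂(γ)/γ)`.
-/

open Topology

section Bessel

/-- From `cosh (n t) ≤ e^{n t}` and `c cosh t ≥ c t² / 8 ≥ (n + 1) t - 2 (n + 1)² / c`. -/
lemma exp_neg_mul_cosh_mul_cosh_le (n : ℕ) {c t : ℝ} (hc : 0 < c) (ht : 0 ≤ t) :
    exp (-c * cosh t) * cosh (n * t) ≤ exp (2 * ((n : ℝ) + 1) ^ 2 / c) * exp (-t) := by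
  have hnt : (0 : ℝ) ≤ n * t := by positivity
  have hcosh_nt : cosh (n * t) ≤ exp (n * t) := by
    rw [cosh_eq]
    nlinarith [exp_le_exp.2 (neg_le_self hnt)]
  have hsq_le_exp : (t / 2 + 1) ^ 2 ≤ exp t := by
    calc (t / 2 + 1) ^ 2 ≤ exp (t / 2) ^ 2 := by
          exact pow_le_pow_left₀ (by positivity) (add_one_le_exp _) 2
      _ = exp t := by rw [← exp_nat_mul]; ring_nf
  have hexp_le_cosh : exp t / 2 ≤ cosh t := by
    rw [cosh_eq]; nlinarith [exp_pos (-t)]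
  have hquad : ((n : ℝ) + 1) * t ≤ 2 * ((n : ℝ) + 1) ^ 2 / c + c * (t ^ 2 / 8) := by
    rw [div_add' _ _ _ hc.ne', le_div_iff₀ hc]
    nlinarith [sq_nonneg (c * t - 4 * ((n : ℝ) + 1))]
  have hexponent : -c * cosh t + n * t ≤ 2 * ((n : ℝ) + 1) ^ 2 / c + -t := by
    nlinarith [mul_le_mul_of_nonneg_left (show t ^ 2 / 8 ≤ cosh t by nlinarith) hc.le]
  calc exp (-c * cosh t) * cosh (n * t) ≤ exp (-c * cosh t) * exp (n * t) := by gcongr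
    _ = exp (-c * cosh t + n * t) := (exp_add _ _).symm
    _ ≤ exp (2 * ((n : ℝ) + 1) ^ 2 / c + -t) := exp_le_exp.2 hexponent
    _ = exp (2 * ((n : ℝ) + 1) ^ 2 / c) * exp (-t) := exp_add _ _

lemma integrableOn_Ioi_exp_neg : IntegrableOn (fun t : ℝ => exp (-t)) (Ioi 0) := by
  simpa using exp_neg_integrableOn_Ioi 0 one_pos

lemma integrableOn_besselK_integrand (n : ℕ) {c : ℝ} (hc : 0 < c) :
    IntegrableOn (fun t => exp (-c * cosh t) * cosh (n * t)) (Ioi 0) := by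
  refine (integrableOn_Ioi_exp_neg.const_mul (exp (2 * ((n : ℝ) + 1) ^ 2 / c))).mono'
    (by fun_prop) ?_
  filter_upwards [ae_restrict_mem measurableSet_Ioi] with t ht
  rw [norm_of_nonneg (by positivity)]
  exact exp_neg_mul_cosh_mul_cosh_le n hc (le_of_lt ht)

lemma besselK_pos (n : ℕ) {x : ℝ} (hx : 0 < x) : 0 < besselK n x := by
  rw [besselK, setIntegral_pos_iff_support_of_nonneg_ae
    (.of_forall fun t => by positivity) (integrableOn_besselK_integrand n hx)]
  have hsupport : Function.support (fun t => exp (-x * cosh t) * cosh (n * t)) = univ :=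
    Function.support_eq_univ fun t => by positivity
  rw [hsupport, univ_inter]
  simp

/-- From `-s cosh t ≤ (γ - s) - γ cosh t`, as `(s - γ) (cosh t - 1) ≥ 0`. -/
lemma besselK_le_exp_mul_exp_neg (n : ℕ) {γ s : ℝ} (hγ : 0 < γ) (hs : γ ≤ s) :
    besselK n s ≤ exp γ * besselK n γ * exp (-s) := by
  have hγs : exp γ * besselK n γ * exp (-s) = exp (γ - s) * besselK n γ := by
    rw [exp_sub, exp_neg]; ring
  rw [hγs, besselK, besselK, ← integral_const_mul]
  refine setIntegral_mono_on (integrableOn_besselK_integrand n (hγ.trans_le hs))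
    ((integrableOn_besselK_integrand n hγ).const_mul _) measurableSet_Ioi fun t _ => ?_
  rw [← mul_assoc, ← exp_add]
  gcongr
  nlinarith [one_le_cosh t]

lemma continuousAt_besselK (n : ℕ) {x : ℝ} (hx : 0 < x) : ContinuousAt (besselK n) x := by
  refine continuousAt_of_dominated (.of_forall fun y => by fun_prop) ?_
    (integrableOn_Ioi_exp_neg.const_mul (exp (2 * ((n : ℝ) + 1) ^ 2 / (x / 2))))
    (.of_forall fun t => by fun_prop)
  filter_upwards [Ioi_mem_nhds (half_lt_self hx)] with y hy
  filter_upwards [ae_restrict_mem measurableSet_Ioi] with t ht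
  rw [norm_of_nonneg (by positivity)]
  refine le_trans ?_ (exp_neg_mul_cosh_mul_cosh_le n (half_pos hx) (le_of_lt ht))
  gcongr
  nlinarith [one_le_cosh t, mem_Ioi.1 hy]

end Bessel

section Concentration

lemma setIntegral_Ioi_eq_comp_add {E : Type*} [NormedAddCommGroup E] [NormedSpace ℝ E]
    (f : ℝ → E) (γ : ℝ) :
    ∫ s in Ioi γ, f s = ∫ x in Ioi 0, f (x + γ) := by
  have hemb : MeasurableEmbedding (fun x : ℝ => x + γ) :=
    (MeasurableEquiv.addRight γ).measurableEmbedding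
  have hmap := hemb.setIntegral_map f (Ioi γ) (μ := volume)
  rw [map_add_right_eq_self volume γ] at hmap
  rw [hmap]
  congr 1
  ext x
  simp

/-- The substitution `u = x ^ p` with `p = 1 / (a + 1)`, for which `p x ^ (p - 1) (x ^ p) ^ a = p`. -/
lemma mul_setIntegral_Ioi_mul_rpow {a : ℝ} (ha : -1 < a) (g : ℝ → ℝ) :
    (a + 1) * ∫ u in Ioi 0, g u * u ^ a = ∫ x in Ioi 0, g (x ^ (1 / (a + 1))) := by
  set p : ℝ := 1 / (a + 1) with hp
  have ha1 : 0 < a + 1 := by linarith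
  have hp0 : 0 < p := by positivity
  have hjacobian : ∀ x ∈ Ioi (0 : ℝ),
      (p * x ^ (p - 1)) • (g (x ^ p) * (x ^ p) ^ a) = p * g (x ^ p) := by
    intro x hx
    have hexp : p - 1 + p * a = 0 := by rw [hp]; field_simp; ring
    rw [smul_eq_mul, ← rpow_mul (le_of_lt hx),
      show p * x ^ (p - 1) * (g (x ^ p) * x ^ (p * a))
        = p * g (x ^ p) * (x ^ (p - 1) * x ^ (p * a)) by ring,
      ← rpow_add hx, hexp, rpow_zero, mul_one]
  rw [← integral_comp_rpow_Ioi_of_pos hp0, setIntegral_congr_fun measurableSet_Ioi hjacobian,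
    integral_const_mul, ← mul_assoc, hp, mul_one_div_cancel ha1.ne', one_mul]

/-- Dominated by `C e e^{-x}`, since `x ^ p ≥ x - 1` for `p ≥ 1`; the pointwise limit is
`g 0` on `(0, 1)` and `0` on `(1, ∞)`. -/
lemma tendsto_setIntegral_Ioi_comp_rpow {g : ℝ → ℝ} {C : ℝ}
    (hcont : ∀ u, 0 ≤ u → ContinuousAt g u) (hbound : ∀ u, 0 ≤ u → |g u| ≤ C * exp (-u)) :
    Tendsto (fun p : ℝ => ∫ x in Ioi 0, g (x ^ p)) atTop (𝓝 (g 0)) := by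
  have hC : 0 ≤ C := by
    nlinarith [hbound 0 le_rfl, abs_nonneg (g 0), exp_pos (-0 : ℝ)]
  have hlimit_int : ∫ x in Ioi 0, (Ioo (0 : ℝ) 1).indicator (fun _ => g 0) x = g 0 := by
    rw [setIntegral_indicator measurableSet_Ioo, inter_eq_right.2 Ioo_subset_Ioi_self]
    simp
  have hg_atTop : Tendsto g atTop (𝓝 0) :=
    squeeze_zero_norm' ((eventually_ge_atTop 0).mono hbound)
      (by simpa using tendsto_exp_neg_atTop_nhds_zero.const_mul C)
  have hne_one : ∀ᵐ x ∂(volume.restrict (Ioi (0 : ℝ))), x ≠ 1 :=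
    Measure.ae_ne _ 1
  rw [← hlimit_int]
  refine tendsto_integral_filter_of_dominated_convergence (fun x => C * exp 1 * exp (-x)) ?_ ?_
    (integrableOn_Ioi_exp_neg.const_mul _) ?_
  · filter_upwards [eventually_gt_atTop 0] with p hp
    refine ContinuousOn.aestronglyMeasurable (fun x hx => ?_) measurableSet_Ioi
    exact ((hcont _ (rpow_nonneg (le_of_lt hx) p)).comp (f := fun x : ℝ => x ^ p)
      (continuousAt_rpow_const x p (Or.inl (ne_of_gt hx)))).continuousWithinAt
  · filter_upwards [eventually_ge_atTop 1] with p hp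
    filter_upwards [ae_restrict_mem measurableSet_Ioi] with x hx
    have hxp : x - 1 ≤ x ^ p := by
      rcases le_or_gt x 1 with hx1 | hx1
      · linarith [rpow_pos_of_pos (mem_Ioi.1 hx) p]
      · linarith [self_le_rpow_of_one_le hx1.le hp]
    calc ‖g (x ^ p)‖ ≤ C * exp (-x ^ p) := hbound _ (rpow_nonneg (le_of_lt hx) p)
      _ ≤ C * exp (1 + -x) := by gcongr; linarith
      _ = C * exp 1 * exp (-x) := by rw [exp_add]; ring
  · filter_upwards [ae_restrict_mem measurableSet_Ioi, hne_one] with x hx hx1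
    rcases lt_or_gt_of_ne hx1 with hlt | hgt
    · rw [indicator_of_mem (show x ∈ Ioo 0 1 from ⟨hx, hlt⟩)]
      exact (hcont 0 le_rfl).tendsto.comp
        (by simpa using tendsto_rpow_atTop_of_base_lt_one x (by linarith [mem_Ioi.1 hx]) hlt)
    · rw [indicator_of_notMem fun h => (lt_asymm h.2 hgt)]
      exact hg_atTop.comp (tendsto_rpow_atTop_of_base_gt_one x hgt)

lemma tendsto_one_div_add_one_nhdsGT_neg_one :
    Tendsto (fun a : ℝ => 1 / (a + 1)) (𝓝[>] (-1)) atTop := by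
  have hshift : Tendsto (fun a : ℝ => a + 1) (𝓝[>] (-1)) (𝓝[>] 0) := by
    refine tendsto_nhdsWithin_of_tendsto_nhds_of_eventually_within _ ?_ ?_
    · exact ((continuous_add_const 1).tendsto' (-1) 0 (by norm_num)).mono_left nhdsWithin_le_nhds
    · filter_upwards [self_mem_nhdsWithin] with a ha
      exact mem_Ioi.2 (neg_lt_iff_pos_add.1 ha)
  simpa [one_div, Function.comp_def] using tendsto_inv_nhdsGT_zero.comp hshift

lemma tendsto_mul_setIntegral_Ioi_mul_rpow {g : ℝ → ℝ} {C : ℝ}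
    (hcont : ∀ u, 0 ≤ u → ContinuousAt g u) (hbound : ∀ u, 0 ≤ u → |g u| ≤ C * exp (-u)) :
    Tendsto (fun a => (a + 1) * ∫ u in Ioi 0, g u * u ^ a) (𝓝[>] (-1)) (𝓝 (g 0)) := by
  refine ((tendsto_setIntegral_Ioi_comp_rpow hcont hbound).comp
    tendsto_one_div_add_one_nhdsGT_neg_one).congr' ?_
  filter_upwards [self_mem_nhdsWithin] with a ha
  exact (mul_setIntegral_Ioi_mul_rpow ha g).symm

lemma tendsto_mul_setIntegral_Ioi_mul_sub_rpow {h : ℝ → ℝ} {γ C : ℝ}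
    (hcont : ∀ s, γ ≤ s → ContinuousAt h s) (hbound : ∀ s, γ ≤ s → |h s| ≤ C * exp (-s)) :
    Tendsto (fun a => (a + 1) * ∫ s in Ioi γ, h s * (s - γ) ^ a) (𝓝[>] (-1)) (𝓝 (h γ)) := by
  have hshifted := tendsto_mul_setIntegral_Ioi_mul_rpow (g := fun u => h (u + γ))
    (C := C * exp (-γ))
    (fun u hu => (hcont _ (by linarith)).comp (continuousAt_id.add continuousAt_const))
    (fun u hu => by
      calc |h (u + γ)| ≤ C * exp (-(u + γ)) := hbound _ (by linarith)
        _ = C * exp (-γ) * exp (-u) := by rw [neg_add, exp_add]; ring)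
  have hshift : ∀ a : ℝ, ∫ s in Ioi γ, h s * (s - γ) ^ a = ∫ u in Ioi 0, h (u + γ) * u ^ a :=
    fun a => by simp [setIntegral_Ioi_eq_comp_add _ γ]
  simpa [hshift] using hshifted

end Concentration

section BesselLimits

variable {γ : ℝ}

lemma abs_besselK_le (n : ℕ) (hγ : 0 < γ) {s : ℝ} (hs : γ ≤ s) :
    |besselK n s| ≤ exp γ * besselK n γ * exp (-s) := by
  rw [abs_of_pos (besselK_pos n (hγ.trans_le hs))]
  exact besselK_le_exp_mul_exp_neg n hγ hs

lemma abs_besselK_div_le (n : ℕ) (hγ : 0 < γ) {s : ℝ} (hs : γ ≤ s) :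
    |besselK n s / s| ≤ exp γ * (besselK n γ / γ) * exp (-s) := by
  rw [abs_div, abs_of_pos (hγ.trans_le hs)]
  calc |besselK n s| / s ≤ |besselK n s| / γ := by gcongr
    _ ≤ exp γ * besselK n γ * exp (-s) / γ := by gcongr; exact abs_besselK_le n hγ hs
    _ = exp γ * (besselK n γ / γ) * exp (-s) := by ring

lemma continuousAt_besselK_div (n : ℕ) (hγ : 0 < γ) {s : ℝ} (hs : γ ≤ s) :
    ContinuousAt (fun s => besselK n s / s) s :=
  (continuousAt_besselK n (hγ.trans_le hs)).div continuousAt_id (hγ.trans_le hs).ne'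

lemma tendsto_mul_setIntegral_besselK_div (n : ℕ) (hγ : 0 < γ) :
    Tendsto (fun a => (a + 1) * ∫ s in Ioi γ, besselK n s / s * (s - γ) ^ a)
      (𝓝[>] (-1)) (𝓝 (besselK n γ / γ)) :=
  tendsto_mul_setIntegral_Ioi_mul_sub_rpow (fun _ hs => continuousAt_besselK_div n hγ hs)
    (fun _ hs => abs_besselK_div_le n hγ hs)

lemma tendsto_mul_setIntegral_besselK_sub_div (m n : ℕ) (hγ : 0 < γ) :
    Tendsto (fun a => (a + 1) * ∫ s in Ioi γ, (besselK m s - besselK n s / s) * (s - γ) ^ a)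
      (𝓝[>] (-1)) (𝓝 (besselK m γ - besselK n γ / γ)) := by
  refine tendsto_mul_setIntegral_Ioi_mul_sub_rpow
    (C := exp γ * besselK m γ + exp γ * (besselK n γ / γ))
    (fun s hs => (continuousAt_besselK m (hγ.trans_le hs)).sub
      (continuousAt_besselK_div n hγ hs)) fun s hs => ?_
  calc |besselK m s - besselK n s / s| ≤ |besselK m s| + |besselK n s / s| := abs_sub _ _
    _ ≤ exp γ * besselK m γ * exp (-s) + exp γ * (besselK n γ / γ) * exp (-s) :=
      add_le_add (abs_besselK_le m hγ hs) (abs_besselK_div_le n hγ hs)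
    _ = (exp γ * besselK m γ + exp γ * (besselK n γ / γ)) * exp (-s) := by ring

end BesselLimits

/-- As `a → -1⁺` the ratio `r(γ, a)` recovers the monatomic (Synge) value
`γ K₃(γ)/K₂(γ) - 1`. -/
theorem rRatio_monatomic_limit (γ : ℝ) (hγ : 0 < γ) :
    Filter.Tendsto (fun a : ℝ => rRatio γ a) (nhdsWithin (-1) (Set.Ioi (-1)))
      (nhds (γ * besselK 3 γ / besselK 2 γ - 1)) := by
  have hK2 := besselK_pos 2 hγ
  have hlimit : (besselK 3 γ - besselK 2 γ / γ) / (besselK 2 γ / γ)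
      = γ * besselK 3 γ / besselK 2 γ - 1 := by
    field_simp
  rw [← hlimit]
  refine ((tendsto_mul_setIntegral_besselK_sub_div 3 2 hγ).div
    (tendsto_mul_setIntegral_besselK_div 2 hγ) (by positivity)).congr' ?_
  filter_upwards [self_mem_nhdsWithin] with a ha
  rw [Pi.div_apply, rRatio, mul_div_mul_left _ _ (neg_lt_iff_pos_add.1 ha).ne']
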